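/- arXiv:2502.03241 — 2 statements merged into one kernel-verified Lean document; each statement's English description precedes it below -/
import Mathlib

section
/- Let p be an odd prime, m = p−1, and let b, b' ∈ {0,...,p−1} with b ≠ b'. If b + b' = (p−1)/2 or b + b' = (3p−1)/2, then r_ave(Ẽ_b) = r_ave(Ẽ_{b'}), where Ẽ_b is the m×m leave-one-out Williams design with (i,j) entry g_b(W((i·j + b) mod p)), g_b(x) = x+1 if x < W(b) and g_b(x) = x if x > W(b). -/
/-- The Williams transformation on `{0,…,p-1}`. -/
def Wtr (p x : ℕ) : ℕ :=
  if 2 * x < p then 2 * x else 2 * (p - x) - 1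

/-- The leave-one-out Williams-transformed design `Ẽ_b`. -/
def Etil (p b i j : ℕ) : ℕ :=
  let x := Wtr p ((i * j + b) % p)
  if x < Wtr p b then x + 1 else x

/-- Correlation between columns `u` and `v` of an `m × m` design with levels `{1,…,m}`. -/
noncomputable def colCorr (m : ℕ) (O : ℕ → ℕ → ℕ) (u v : ℕ) : ℝ :=
  ((∑ i ∈ Finset.Icc 1 m, (O i u : ℝ) * (O i v : ℝ)) - (m : ℝ) * ((m : ℝ) + 1) ^ 2 / 4) /
    ((m : ℝ) * ((m : ℝ) ^ 2 - 1) / 12)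

/-- Average absolute column correlation `r_ave(O)` of an `m × m` design. -/
noncomputable def rAve (m : ℕ) (O : ℕ → ℕ → ℕ) : ℝ :=
  (∑ u ∈ Finset.Icc 1 m, ∑ v ∈ Finset.Icc 1 m, if u ≠ v then |colCorr m O u v| else 0) /
    ((m : ℝ) * ((m : ℝ) - 1))


section Stmt7Aux

lemma wtr_lt' {p : ℕ} (hodd : Odd p) {x : ℕ} (hx : x < p) : Wtr p x < p := by
  unfold Wtr; obtain ⟨k, hk⟩ := hodd; split <;> omega

lemma wtr_inj' {p : ℕ} (hodd : Odd p) {x y : ℕ} (hx : x < p) (hy : y < p)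
    (h : Wtr p x = Wtr p y) : x = y := by
  unfold Wtr at h; obtain ⟨k, hk⟩ := hodd
  split at h <;> split at h <;> omega

lemma wtr_compl' {p : ℕ} (hodd : Odd p) {x : ℕ} (hx : x < p) :
    Wtr p (((p-1)/2 + p - x) % p) = p - 1 - Wtr p x := by
  obtain ⟨k, hk⟩ := hodd; subst hk
  have hc : (2*k+1-1)/2 = k := by omega
  rw [hc]
  rcases le_or_gt x k with h | h
  · have hm : (k + (2*k+1) - x) % (2*k+1) = k - x := by
      have h1 : k + (2*k+1) - x = (k - x) + (2*k+1) := by omega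
      rw [h1, Nat.add_mod_right, Nat.mod_eq_of_lt (by omega)]
    rw [hm]; unfold Wtr; split_ifs <;> omega
  · have hm : (k + (2*k+1) - x) % (2*k+1) = k + (2*k+1) - x :=
      Nat.mod_eq_of_lt (by omega)
    rw [hm]; unfold Wtr; split_ifs <;> omega

lemma b'_eq' {p b b' : ℕ} (hodd : Odd p) (hb' : b' < p)
    (hsum : b + b' = (p-1)/2 ∨ b + b' = (3*p-1)/2) :
    b' = ((p-1)/2 + p - b) % p := by
  obtain ⟨k, hk⟩ := hodd; subst hk
  rcases hsum with h | h
  · have h1 : (2*k+1-1)/2 + (2*k+1) - b = b' + (2*k+1) := by omega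
    rw [h1, Nat.add_mod_right, Nat.mod_eq_of_lt hb']
  · have h1 : (2*k+1-1)/2 + (2*k+1) - b = b' := by omega
    rw [h1, Nat.mod_eq_of_lt hb']

lemma r_ne_b' {p : ℕ} (hp : p.Prime) {b i j : ℕ} (hb : b < p)
    (hi : 1 ≤ i) (hi' : i ≤ p - 1) (hj : 1 ≤ j) (hj' : j ≤ p - 1) :
    (i * j + b) % p ≠ b := by
  intro h
  have h2 : i * j + b ≡ 0 + b [MOD p] := by
    unfold Nat.ModEq
    simpa [Nat.mod_eq_of_lt hb] using h
  have h3 : p ∣ i * j := (Nat.modEq_zero_iff_dvd).mp (h2.add_right_cancel' b)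
  rcases (hp.dvd_mul).mp h3 with h4 | h4
  · have := Nat.le_of_dvd (by omega) h4; omega
  · have := Nat.le_of_dvd (by omega) h4; omega

lemma mod_flip' {p : ℕ} (hp : p.Prime) {b b' i j : ℕ} (hb : b < p)
    (hb' : b' = ((p-1)/2 + p - b) % p) (hi : 1 ≤ i) (hi' : i ≤ p - 1) :
    ((p - i) * j + b') % p = ((p-1)/2 + p - ((i*j+b) % p)) % p := by
  have hpp : 0 < p := hp.pos
  have hr : (i*j+b) % p < p := Nat.mod_lt _ hpp
  have : (((p - i) * j + b' : ℕ) : ZMod p) = (((p-1)/2 + p - ((i*j+b) % p) : ℕ) : ZMod p) := by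
    subst hb'
    have h1 : ((p - i : ℕ) : ZMod p) = (p : ℕ) - (i : ℕ) := by
      push_cast [Nat.cast_sub (by omega : i ≤ p)]; ring
    have h2 : (((p-1)/2 + p - b : ℕ) : ZMod p) = ((p-1)/2 : ℕ) + (p : ℕ) - (b : ℕ) := by
      push_cast [Nat.cast_sub (by omega : b ≤ (p-1)/2 + p)]; ring
    have h3 : (((p-1)/2 + p - ((i*j+b) % p) : ℕ) : ZMod p)
        = ((p-1)/2 : ℕ) + (p : ℕ) - (((i*j+b) % p : ℕ) : ZMod p) := by
      push_cast [Nat.cast_sub (by omega : (i*j+b) % p ≤ (p-1)/2 + p)]; ring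
    push_cast [ZMod.natCast_mod] at *
    rw [h3, h1, h2]
    simp only [ZMod.natCast_self]
    ring
  have := (ZMod.natCast_eq_natCast_iff _ _ _).mp this
  exact this

lemma etil_bounds' {p : ℕ} (hp : p.Prime) (hodd : Odd p) {b i j : ℕ} (hb : b < p)
    (hi : 1 ≤ i) (hi' : i ≤ p - 1) (hj : 1 ≤ j) (hj' : j ≤ p - 1) :
    1 ≤ Etil p b i j ∧ Etil p b i j ≤ p - 1 := by
  have hr : (i*j+b) % p < p := Nat.mod_lt _ hp.pos
  have hx : Wtr p ((i*j+b) % p) < p := wtr_lt' hodd hr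
  have hwb : Wtr p b < p := wtr_lt' hodd hb
  have hne : Wtr p ((i*j+b) % p) ≠ Wtr p b := fun h =>
    r_ne_b' hp hb hi hi' hj hj' (wtr_inj' hodd hr hb h)
  simp only [Etil]
  split_ifs <;> omega

lemma etil_flip' {p : ℕ} (hp : p.Prime) (hodd : Odd p) {b b' i j : ℕ} (hb : b < p)
    (hbp : b' = ((p-1)/2 + p - b) % p)
    (hi : 1 ≤ i) (hi' : i ≤ p - 1) (hj : 1 ≤ j) (hj' : j ≤ p - 1) :
    Etil p b' (p - i) j = p - Etil p b i j := by
  have hr : (i*j+b) % p < p := Nat.mod_lt _ hp.pos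
  have hx : Wtr p ((i*j+b) % p) < p := wtr_lt' hodd hr
  have hwb : Wtr p b < p := wtr_lt' hodd hb
  have hne : Wtr p ((i*j+b) % p) ≠ Wtr p b := fun h =>
    r_ne_b' hp hb hi hi' hj hj' (wtr_inj' hodd hr hb h)
  have h1 : Wtr p (((p - i) * j + b') % p) = p - 1 - Wtr p ((i*j+b) % p) := by
    rw [mod_flip' hp hb hbp hi hi', wtr_compl' hodd hr]
  have h2 : Wtr p b' = p - 1 - Wtr p b := by
    rw [hbp, wtr_compl' hodd hb]
  simp only [Etil]
  rw [h1, h2]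
  split_ifs <;> omega

lemma etil_injOn' {p : ℕ} (hp : p.Prime) (hodd : Odd p) {b u : ℕ} (hb : b < p)
    (hu : 1 ≤ u) (hu' : u ≤ p - 1) :
    ∀ i ∈ Finset.Icc 1 (p-1), ∀ i' ∈ Finset.Icc 1 (p-1),
      Etil p b i u = Etil p b i' u → i = i' := by
  intro i hi i' hi' h
  simp only [Finset.mem_Icc] at hi hi'
  haveI := Fact.mk hp
  have hr : (i*u+b) % p < p := Nat.mod_lt _ hp.pos
  have hr' : (i'*u+b) % p < p := Nat.mod_lt _ hp.pos
  have hx : Wtr p ((i*u+b) % p) < p := wtr_lt' hodd hr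
  have hx' : Wtr p ((i'*u+b) % p) < p := wtr_lt' hodd hr'
  have hwb : Wtr p b < p := wtr_lt' hodd hb
  have hne : Wtr p ((i*u+b) % p) ≠ Wtr p b := fun h =>
    r_ne_b' hp hb hi.1 hi.2 hu hu' (wtr_inj' hodd hr hb h)
  have hne' : Wtr p ((i'*u+b) % p) ≠ Wtr p b := fun h =>
    r_ne_b' hp hb hi'.1 hi'.2 hu hu' (wtr_inj' hodd hr' hb h)
  simp only [Etil] at h
  have hxx : Wtr p ((i*u+b) % p) = Wtr p ((i'*u+b) % p) := by
    split_ifs at h <;> omega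
  have hrr : (i*u+b) % p = (i'*u+b) % p := wtr_inj' hodd hr hr' hxx
  have hz : ((i : ZMod p)) = (i' : ZMod p) := by
    have h1 : ((i*u+b : ℕ) : ZMod p) = ((i'*u+b : ℕ) : ZMod p) :=
      (ZMod.natCast_eq_natCast_iff _ _ _).mpr hrr
    push_cast at h1
    have hu0 : (u : ZMod p) ≠ 0 := by
      rw [Ne, ZMod.natCast_eq_zero_iff]
      intro hd
      have := Nat.le_of_dvd (by omega) hd; omega
    have : (i : ZMod p) * u = (i' : ZMod p) * u := by linear_combination h1
    exact mul_right_cancel₀ hu0 this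
  have := (ZMod.natCast_eq_natCast_iff _ _ _).mp hz
  have h2 : i % p = i' % p := this
  rw [Nat.mod_eq_of_lt (by omega), Nat.mod_eq_of_lt (by omega)] at h2
  exact h2

lemma etil_image' {p : ℕ} (hp : p.Prime) (hodd : Odd p) {b u : ℕ} (hb : b < p)
    (hu : 1 ≤ u) (hu' : u ≤ p - 1) :
    (Finset.Icc 1 (p-1)).image (fun i => Etil p b i u) = Finset.Icc 1 (p-1) := by
  apply Finset.eq_of_subset_of_card_le
  · intro y hy
    simp only [Finset.mem_image, Finset.mem_Icc] at hy ⊢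
    obtain ⟨i, hi, rfl⟩ := hy
    exact etil_bounds' hp hodd hb hi.1 hi.2 hu hu'
  · rw [Finset.card_image_of_injOn]
    intro i hi i' hi' h
    exact etil_injOn' hp hodd hb hu hu' i hi i' hi' h

lemma col_sum' {p : ℕ} (hp : p.Prime) (hodd : Odd p) {b u : ℕ} (hb : b < p)
    (hu : 1 ≤ u) (hu' : u ≤ p - 1) :
    ∑ i ∈ Finset.Icc 1 (p-1), ((Etil p b i u : ℝ)) = ∑ n ∈ Finset.Icc 1 (p-1), (n : ℝ) := by
  have h := Finset.sum_image (f := fun n : ℕ => (n : ℝ)) (g := fun i : ℕ => Etil p b i u)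
    (s := Finset.Icc 1 (p-1)) (etil_injOn' hp hodd hb hu hu')
  rw [etil_image' hp hodd hb hu hu'] at h
  exact h.symm

lemma gauss' {m : ℕ} : ∑ n ∈ Finset.Icc 1 m, (n : ℝ) = (m : ℝ) * ((m : ℝ) + 1) / 2 := by
  induction m with
  | zero => simp
  | succ k ih =>
    rw [Finset.sum_Icc_succ_top (by omega), ih]
    push_cast
    ring

lemma prod_sum_eq' {p : ℕ} (hp : p.Prime) (hodd : Odd p) {b b' u v : ℕ} (hb : b < p)
    (hbp : b' = ((p-1)/2 + p - b) % p)
    (hu : 1 ≤ u) (hu' : u ≤ p - 1) (hv : 1 ≤ v) (hv' : v ≤ p - 1) :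
    ∑ i ∈ Finset.Icc 1 (p-1), (Etil p b' i u : ℝ) * (Etil p b' i v : ℝ)
      = ∑ i ∈ Finset.Icc 1 (p-1), (Etil p b i u : ℝ) * (Etil p b i v : ℝ) := by
  have hp3 : 3 ≤ p := by
    have := hp.two_le; obtain ⟨k, hk⟩ := hodd; omega
  have step1 : ∑ i ∈ Finset.Icc 1 (p-1), (Etil p b' i u : ℝ) * (Etil p b' i v : ℝ)
      = ∑ i ∈ Finset.Icc 1 (p-1), (Etil p b' (p-i) u : ℝ) * (Etil p b' (p-i) v : ℝ) := by
    refine Finset.sum_nbij' (fun i => p - i) (fun i => p - i) ?_ ?_ ?_ ?_ ?_ <;>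
      intro a ha <;> simp only [Finset.mem_Icc] at * <;> first
      | omega
      | (congr 2 <;> congr 1 <;> omega)
  rw [step1]
  have hb1 : ∀ i ∈ Finset.Icc 1 (p-1), (Etil p b' (p-i) u : ℝ) * (Etil p b' (p-i) v : ℝ)
      = ((p:ℝ) - Etil p b i u) * ((p:ℝ) - Etil p b i v) := by
    intro i hi
    simp only [Finset.mem_Icc] at hi
    rw [etil_flip' hp hodd hb hbp hi.1 hi.2 hu hu',
        etil_flip' hp hodd hb hbp hi.1 hi.2 hv hv']
    have h1 := etil_bounds' hp hodd hb hi.1 hi.2 hu hu'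
    have h2 := etil_bounds' hp hodd hb hi.1 hi.2 hv hv'
    rw [Nat.cast_sub (by omega), Nat.cast_sub (by omega)]
  rw [Finset.sum_congr rfl hb1]
  have expand : ∀ i ∈ Finset.Icc 1 (p-1),
      ((p:ℝ) - Etil p b i u) * ((p:ℝ) - Etil p b i v)
      = (p:ℝ)*(p:ℝ) - (p:ℝ)*(Etil p b i u) - (p:ℝ)*(Etil p b i v)
        + (Etil p b i u : ℝ)*(Etil p b i v : ℝ) := by
    intro i _; ring
  rw [Finset.sum_congr rfl expand]
  rw [Finset.sum_add_distrib, Finset.sum_sub_distrib, Finset.sum_sub_distrib,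
      Finset.sum_const, ← Finset.mul_sum, ← Finset.mul_sum,
      col_sum' hp hodd hb hu hu', col_sum' hp hodd hb hv hv', gauss']
  rw [Nat.card_Icc, nsmul_eq_mul]
  have h1 : p - 1 + 1 - 1 = p - 1 := by omega
  have hm : ((p - 1 : ℕ) : ℝ) = (p : ℝ) - 1 := by
    push_cast [Nat.cast_sub (by omega : 1 ≤ p)]
    ring
  rw [h1, hm]
  ring

end Stmt7Aux

/-- for an odd prime `p`, `m = p - 1`, and distinct `b, b' ∈ {0,…,p-1}`
with `b + b' = (p-1)/2` or `b + b' = (3p-1)/2`, we have `r_ave(Ẽ_b) = r_ave(Ẽ_{b'})`. -/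
theorem stmt_7 (p : ℕ) (hp : p.Prime) (hodd : Odd p)
    (b b' : ℕ) (hb : b < p) (hb' : b' < p) (hne : b ≠ b')
    (hsum : b + b' = (p - 1) / 2 ∨ b + b' = (3 * p - 1) / 2) :
    rAve (p - 1) (Etil p b) = rAve (p - 1) (Etil p b') := by
  have hbp : b' = ((p-1)/2 + p - b) % p := b'_eq' hodd hb' hsum
  unfold rAve
  congr 1
  apply Finset.sum_congr rfl
  intro u hu
  apply Finset.sum_congr rfl
  intro v hv
  simp only [Finset.mem_Icc] at hu hv
  by_cases h : u = v
  · simp [h]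
  · simp only [h, ne_eq, not_false_eq_true, if_true]
    congr 1
    unfold colCorr
    rw [prod_sum_eq' hp hodd hb hbp hu.1 hu.2 hv.1 hv.2]
end

section
/- Let p ≥ 5 be an odd prime, m = p−1, and b ∈ {1,...,p−1}. Let O be the 2m×m design obtained by stacking the leave-one-out Williams designs Ẽ_b (rows 1,...,m) and Ẽ_{p−b} (rows m+1,...,2m). Then every pair of distinct rows of O has Hamming distance at least m−2, the minimum pairwise Hamming distance of O equals m−2, and exactly m unordered pairs of distinct rows of O have Hamming distance exactly m−2 (namely the pairs consisting of row i of Ẽ_b and row p−i of Ẽ_{p−b} for i = 1,...,m). -/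
/-- Row `r` (for `1 ≤ r ≤ 2(p-1)`) of the `2m × m` design `O` obtained by stacking
`Ẽ_b` (rows `1,…,m`) on top of `Ẽ_{p-b}` (rows `m+1,…,2m`), with `m = p - 1`. -/
def stackRow (p b r j : ℕ) : ℕ :=
  if r ≤ p - 1 then Etil p b r j else Etil p (p - b) (r - (p - 1)) j

/-- Hamming distance between rows `r` and `r'` of the stacked design. -/
def stackHam (p b r r' : ℕ) : ℕ :=
  ((Finset.Icc 1 (p - 1)).filter fun j => stackRow p b r j ≠ stackRow p b r' j).card

/-!
Entry `(i, j)` of `Ẽ_c` is `g_c (W x)` with `x = i j + c` in `𝔽_p`. As `W` is injective on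
residues and `x ≠ c` (because `i j ≠ 0`), `g_c` is never evaluated at its gap, so two entries of
one block agree only when their residues do: distinct rows of one block differ everywhere.
Since `p` is odd, `W b` and `W (-b)` are consecutive, and then `g_b (W x) = g_{-b} (W y)`
exactly when `x = y` or `(x, y) = (-b, b)`. For row `i` of `Ẽ_b` and row `k` of `Ẽ_{-b}`
these are linear conditions on the column `j`, with two solutions if `k = -i`, none if `k = i`
and one otherwise, giving Hamming distances `m - 2`, `m` and `m - 1`.
-/

lemma Nat.Prime.three_le_of_odd {p : ℕ} (hp : p.Prime) (hodd : Odd p) : 3 ≤ p := by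
  obtain ⟨t, rfl⟩ := hodd
  have := hp.two_le
  omega

/-- The map `g_B` of the leave-one-out construction. -/
def shiftBelow (B u : ℕ) : ℕ :=
  if u < B then u + 1 else u

lemma shiftBelow_inj {B u v : ℕ} (hu : u ≠ B) (hv : v ≠ B) :
    shiftBelow B u = shiftBelow B v ↔ u = v := by
  unfold shiftBelow
  split_ifs <;> omega

lemma shiftBelow_eq_shiftBelow_iff {B C u v : ℕ} (hBC : B = C + 1 ∨ C = B + 1)
    (hu : u ≠ B) (hv : v ≠ C) :
    shiftBelow B u = shiftBelow C v ↔ u = v ∨ (u = C ∧ v = B) := by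
  unfold shiftBelow
  split_ifs <;> omega

lemma Wtr_injOn (p : ℕ) : Set.InjOn (Wtr p) (Set.Iio p) := by
  intro x hx y hy h
  simp only [Set.mem_Iio] at hx hy
  unfold Wtr at h
  split_ifs at h <;> omega

lemma Wtr_sub_eq_or {p b : ℕ} (hodd : Odd p) (hb : b ∈ Finset.Icc 1 (p - 1)) :
    Wtr p b = Wtr p (p - b) + 1 ∨ Wtr p (p - b) = Wtr p b + 1 := by
  obtain ⟨t, rfl⟩ := hodd
  rw [Finset.mem_Icc] at hb
  unfold Wtr
  split_ifs <;> omega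

/-- Column `x` of row `i` of `Ẽ_b` and row `k` of `Ẽ_{-b}` agree: the residues coincide, or they
are the two leave-out points swapped. -/
def CrossMatch {F : Type*} [Field F] (i k b x : F) : Prop :=
  i * x + b = k * x - b ∨ (i * x + b = -b ∧ k * x - b = b)

instance {F : Type*} [Field F] [DecidableEq F] (i k b x : F) :
    Decidable (CrossMatch i k b x) :=
  inferInstanceAs (Decidable (_ ∨ _))

section CrossMatch
variable {F : Type*} [Field F] {i k b x : F}

lemma crossMatch_neg_iff (h2 : (2 : F) ≠ 0) (hi : i ≠ 0) :
    CrossMatch i (-i) b x ↔ x = -b / i ∨ x = -(2 * b) / i := by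
  unfold CrossMatch
  rw [eq_div_iff hi, eq_div_iff hi]
  refine or_congr ⟨fun h => mul_left_cancel₀ h2 ?_, fun h => ?_⟩
    ⟨fun h => by linear_combination h.1, fun h => ⟨?_, ?_⟩⟩
  · linear_combination h
  · linear_combination 2 * h
  · linear_combination h
  · linear_combination -h

lemma not_crossMatch_self (h2 : (2 : F) ≠ 0) (hb : b ≠ 0) : ¬ CrossMatch i i b x := by
  have h4 : (4 : F) ≠ 0 := by simpa [show (4 : F) = 2 * 2 by norm_num] using h2
  rintro (h | ⟨h, h'⟩)
  · exact hb (mul_left_cancel₀ h2 (by linear_combination h))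
  · exact hb (mul_left_cancel₀ h4 (by linear_combination h - h'))

lemma crossMatch_iff (hx : x ≠ 0) (hki : k ≠ i) (hk : k ≠ -i) :
    CrossMatch i k b x ↔ x = -(2 * b) / (i - k) := by
  have hik : i - k ≠ 0 := sub_ne_zero.mpr (Ne.symm hki)
  have hik' : i + k ≠ 0 := fun h => hk (by linear_combination h)
  unfold CrossMatch
  rw [eq_div_iff hik]
  refine ⟨?_, fun h => Or.inl (by linear_combination h)⟩
  rintro (h | ⟨h, h'⟩)
  · linear_combination h
  · exact absurd (mul_eq_zero.mp (by linear_combination h + h' : (i + k) * x = 0))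
      (not_or.mpr ⟨hik', hx⟩)

end CrossMatch

namespace ZMod

variable {p : ℕ}

lemma natCast_ne_zero_of_mem_Icc {a : ℕ} (ha : a ∈ Finset.Icc 1 (p - 1)) :
    (a : ZMod p) ≠ 0 := by
  rw [Finset.mem_Icc] at ha
  rw [Ne, ZMod.natCast_eq_zero_iff]
  exact Nat.not_dvd_of_pos_of_lt (by omega) (by omega)

lemma natCast_injOn : Set.InjOn (Nat.cast : ℕ → ZMod p) (Set.Iio p) := by
  intro a ha c hc h
  rwa [ZMod.natCast_eq_natCast_iff', Nat.mod_eq_of_lt ha, Nat.mod_eq_of_lt hc] at h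

lemma natCast_sub_self {a : ℕ} (ha : a ≤ p) : ((p - a : ℕ) : ZMod p) = -a := by
  rw [Nat.cast_sub ha, ZMod.natCast_self, zero_sub]

lemma card_filter_natCast_mem [NeZero p] (S : Finset (ZMod p)) (h0 : (0 : ZMod p) ∉ S) :
    ((Finset.Icc 1 (p - 1)).filter fun j : ℕ => (j : ZMod p) ∈ S).card = S.card := by
  refine Finset.card_nbij' (fun j => (j : ZMod p)) ZMod.val ?_ ?_ ?_ ?_
  · intro j hj
    exact (Finset.mem_filter.mp hj).2
  · intro x hx
    have hx0 : x.val ≠ 0 := fun h => h0 (by rwa [← (ZMod.val_eq_zero x).mp h])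
    have := ZMod.val_lt x
    simp only [Finset.coe_filter, Finset.mem_Icc, Set.mem_ofPred_eq, ZMod.natCast_zmod_val]
    exact ⟨⟨by omega, by omega⟩, hx⟩
  · intro j hj
    simp only [Finset.coe_filter, Finset.mem_Icc, Set.mem_ofPred_eq] at hj
    exact ZMod.val_cast_of_lt (by omega)
  · intro x _
    exact ZMod.natCast_zmod_val x

lemma two_ne_zero_of_odd [Fact p.Prime] (hodd : Odd p) : (2 : ZMod p) ≠ 0 := by
  have := (Fact.out : p.Prime).three_le_of_odd hodd
  exact_mod_cast natCast_ne_zero_of_mem_Icc (p := p) (a := 2)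
    (Finset.mem_Icc.mpr ⟨by norm_num, by omega⟩)

section CrossMatch
variable [Fact p.Prime] {i k b : ZMod p}

lemma card_filter_crossMatch_neg (h2 : (2 : ZMod p) ≠ 0) (hi : i ≠ 0) (hb : b ≠ 0) :
    ((Finset.Icc 1 (p - 1)).filter fun j : ℕ => CrossMatch i (-i) b j).card = 2 := by
  have ha : -b / i ≠ 0 := div_ne_zero (neg_ne_zero.mpr hb) hi
  have ha' : -(2 * b) / i ≠ 0 := div_ne_zero (neg_ne_zero.mpr (mul_ne_zero h2 hb)) hi
  have hpair : -b / i ≠ -(2 * b) / i := by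
    rw [Ne, div_left_inj' hi, neg_inj]
    intro h
    exact hb (by linear_combination -h)
  have hS : (0 : ZMod p) ∉ ({-b / i, -(2 * b) / i} : Finset (ZMod p)) := by
    simp only [Finset.mem_insert, Finset.mem_singleton, not_or]
    exact ⟨ha.symm, ha'.symm⟩
  refine (congrArg Finset.card (Finset.filter_congr fun j _ => ?_)).trans
    ((card_filter_natCast_mem _ hS).trans (Finset.card_pair hpair))
  rw [crossMatch_neg_iff h2 hi, Finset.mem_insert, Finset.mem_singleton]

lemma card_filter_crossMatch_self (h2 : (2 : ZMod p) ≠ 0) (hb : b ≠ 0) :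
    ((Finset.Icc 1 (p - 1)).filter fun j : ℕ => CrossMatch i i b j).card = 0 := by
  rw [Finset.card_eq_zero, Finset.filter_eq_empty_iff]
  exact fun _ _ => not_crossMatch_self h2 hb

lemma card_filter_crossMatch_of_ne (h2 : (2 : ZMod p) ≠ 0) (hb : b ≠ 0) (hki : k ≠ i)
    (hk : k ≠ -i) :
    ((Finset.Icc 1 (p - 1)).filter fun j : ℕ => CrossMatch i k b j).card = 1 := by
  have ha : -(2 * b) / (i - k) ≠ 0 :=
    div_ne_zero (neg_ne_zero.mpr (mul_ne_zero h2 hb)) (sub_ne_zero.mpr hki.symm)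
  refine (congrArg Finset.card (Finset.filter_congr fun j hj => ?_)).trans
    ((card_filter_natCast_mem _ (Finset.notMem_singleton.mpr ha.symm)).trans
      (Finset.card_singleton _))
  rw [crossMatch_iff (natCast_ne_zero_of_mem_Icc hj) hki hk, Finset.mem_singleton]

end CrossMatch

end ZMod

section Entries
variable {p : ℕ}

lemma Etil_eq_shiftBelow (c i j : ℕ) :
    Etil p c i j = shiftBelow (Wtr p c) (Wtr p ((i : ZMod p) * j + c).val) := by
  rw [show (i : ZMod p) * j + c = ((i * j + c : ℕ) : ZMod p) by push_cast; ring,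
    ZMod.val_natCast]
  rfl

variable [Fact p.Prime]

lemma Wtr_val_inj {x y : ZMod p} : Wtr p x.val = Wtr p y.val ↔ x = y :=
  ⟨fun h => ZMod.val_injective p (Wtr_injOn p (ZMod.val_lt x) (ZMod.val_lt y) h),
    congrArg (fun x : ZMod p => Wtr p x.val)⟩

lemma Wtr_val_eq_Wtr_iff {x : ZMod p} {c : ℕ} (hc : c < p) :
    Wtr p x.val = Wtr p c ↔ x = c := by
  conv_lhs => rw [← ZMod.val_cast_of_lt hc]
  exact Wtr_val_inj

lemma Wtr_val_ne_Wtr {i j c : ℕ} (hc : c < p) (hi : (i : ZMod p) ≠ 0)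
    (hj : (j : ZMod p) ≠ 0) : Wtr p ((i : ZMod p) * j + c).val ≠ Wtr p c := by
  rw [Ne, Wtr_val_eq_Wtr_iff hc, add_eq_right]
  exact mul_ne_zero hi hj

lemma Etil_ne_Etil {c i k j : ℕ} (hc : c < p) (hi : (i : ZMod p) ≠ 0)
    (hk : (k : ZMod p) ≠ 0) (hj : (j : ZMod p) ≠ 0) (hik : (i : ZMod p) ≠ k) :
    Etil p c i j ≠ Etil p c k j := by
  rw [Etil_eq_shiftBelow, Etil_eq_shiftBelow, Ne,
    shiftBelow_inj (Wtr_val_ne_Wtr hc hi hj) (Wtr_val_ne_Wtr hc hk hj), Wtr_val_inj]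
  exact fun h => hik (mul_right_cancel₀ hj (add_right_cancel h))

lemma Etil_eq_Etil_sub_iff (hodd : Odd p) {b i k j : ℕ} (hb : b ∈ Finset.Icc 1 (p - 1))
    (hi : (i : ZMod p) ≠ 0) (hk : (k : ZMod p) ≠ 0) (hj : (j : ZMod p) ≠ 0) :
    Etil p b i j = Etil p (p - b) k j ↔ CrossMatch (i : ZMod p) k b j := by
  have hbp : b < p := by rw [Finset.mem_Icc] at hb; omega
  have hpb : p - b < p := by rw [Finset.mem_Icc] at hb; omega
  rw [Etil_eq_shiftBelow, Etil_eq_shiftBelow, shiftBelow_eq_shiftBelow_iff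
    (Wtr_sub_eq_or hodd hb) (Wtr_val_ne_Wtr hbp hi hj) (Wtr_val_ne_Wtr hpb hk hj),
    Wtr_val_inj, Wtr_val_eq_Wtr_iff hbp, Wtr_val_eq_Wtr_iff hpb, ZMod.natCast_sub_self hbp.le]
  simp only [CrossMatch, ← sub_eq_add_neg]

lemma card_filter_crossMatch (hodd : Odd p) {b i k : ℕ} (hb : b ∈ Finset.Icc 1 (p - 1))
    (hi : i ∈ Finset.Icc 1 (p - 1)) (hk : k ∈ Finset.Icc 1 (p - 1)) :
    ((Finset.Icc 1 (p - 1)).filter fun j : ℕ => CrossMatch (i : ZMod p) k b j).card =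
      if k = p - i then 2 else if k = i then 0 else 1 := by
  have h2 := ZMod.two_ne_zero_of_odd hodd
  have hb0 := ZMod.natCast_ne_zero_of_mem_Icc hb
  have hi0 := ZMod.natCast_ne_zero_of_mem_Icc hi
  rw [Finset.mem_Icc] at hi hk
  split_ifs with hki hki'
  · rw [hki, ZMod.natCast_sub_self (by omega)]
    exact ZMod.card_filter_crossMatch_neg h2 hi0 hb0
  · rw [hki']
    exact ZMod.card_filter_crossMatch_self h2 hb0
  · have hne : (k : ZMod p) ≠ i := fun h =>
      hki' (ZMod.natCast_injOn (Set.mem_Iio.mpr (by omega)) (Set.mem_Iio.mpr (by omega)) h)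
    have hne' : (k : ZMod p) ≠ -i := fun h =>
      hki (ZMod.natCast_injOn (Set.mem_Iio.mpr (by omega)) (Set.mem_Iio.mpr (by omega))
        (h.trans (ZMod.natCast_sub_self (by omega)).symm))
    exact ZMod.card_filter_crossMatch_of_ne h2 hb0 hne hne'

end Entries

section Stack
variable {p b : ℕ}

lemma stackRow_of_le {r : ℕ} (hr : r ≤ p - 1) : stackRow p b r = Etil p b r :=
  funext fun _ => if_pos hr

lemma stackRow_add {k : ℕ} (hk : 1 ≤ k) : stackRow p b (p - 1 + k) = Etil p (p - b) k :=
  funext fun _ => by rw [stackRow, if_neg (by omega), Nat.add_sub_cancel_left]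

lemma stackHam_comm (r r' : ℕ) : stackHam p b r r' = stackHam p b r' r := by
  simp only [stackHam, ne_comm]

lemma stackHam_eq_sub_card (r r' : ℕ) :
    stackHam p b r r' = (p - 1) -
      ((Finset.Icc 1 (p - 1)).filter fun j => stackRow p b r j = stackRow p b r' j).card := by
  rw [stackHam, Finset.filter_not, Finset.card_sdiff_of_subset (Finset.filter_subset _ _),
    Nat.card_Icc, Nat.add_sub_cancel]

variable [Fact p.Prime]

lemma stackHam_of_same_block (hb : b ∈ Finset.Icc 1 (p - 1)) {r r' : ℕ}
    (hr : r ∈ Finset.Icc 1 (2 * (p - 1))) (hr' : r' ∈ Finset.Icc 1 (2 * (p - 1)))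
    (hne : r ≠ r') (hblock : r ≤ p - 1 ↔ r' ≤ p - 1) :
    stackHam p b r r' = p - 1 := by
  rw [Finset.mem_Icc] at hb hr hr'
  have hcast {a : ℕ} (h1 : 1 ≤ a) (h2 : a ≤ p - 1) : (a : ZMod p) ≠ 0 :=
    ZMod.natCast_ne_zero_of_mem_Icc (Finset.mem_Icc.mpr ⟨h1, h2⟩)
  have hinj {a c : ℕ} (ha : a < p) (hc : c < p) (h : a ≠ c) : (a : ZMod p) ≠ c :=
    fun h' => h (ZMod.natCast_injOn ha hc h')
  rw [stackHam_eq_sub_card, Finset.card_eq_zero.mpr, Nat.sub_zero]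
  refine Finset.filter_eq_empty_iff.mpr fun j hj => ?_
  rw [Finset.mem_Icc] at hj
  by_cases hle : r ≤ p - 1
  · rw [stackRow_of_le hle, stackRow_of_le (hblock.mp hle)]
    exact Etil_ne_Etil (by omega) (hcast hr.1 hle) (hcast hr'.1 (hblock.mp hle))
      (hcast hj.1 hj.2) (hinj (by omega) (by omega) hne)
  · obtain ⟨k, rfl⟩ : ∃ k, r = p - 1 + k := ⟨r - (p - 1), by omega⟩
    obtain ⟨k', rfl⟩ : ∃ k', r' = p - 1 + k' := ⟨r' - (p - 1), by omega⟩
    rw [stackRow_add (by omega), stackRow_add (by omega)]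
    exact Etil_ne_Etil (by omega) (hcast (by omega) (by omega)) (hcast (by omega) (by omega))
      (hcast hj.1 hj.2) (hinj (by omega) (by omega) (by omega))

lemma stackHam_cross (hodd : Odd p) (hb : b ∈ Finset.Icc 1 (p - 1)) {i k : ℕ}
    (hi : i ∈ Finset.Icc 1 (p - 1)) (hk : k ∈ Finset.Icc 1 (p - 1)) :
    stackHam p b i (p - 1 + k) =
      (p - 1) - if k = p - i then 2 else if k = i then 0 else 1 := by
  rw [stackHam_eq_sub_card, stackRow_of_le (Finset.mem_Icc.mp hi).2,
    stackRow_add (Finset.mem_Icc.mp hk).1, ← card_filter_crossMatch hodd hb hi hk]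
  refine congrArg _ (congrArg _ (Finset.filter_congr fun j hj => ?_))
  exact Etil_eq_Etil_sub_iff hodd hb (ZMod.natCast_ne_zero_of_mem_Icc hi)
    (ZMod.natCast_ne_zero_of_mem_Icc hk) (ZMod.natCast_ne_zero_of_mem_Icc hj)

lemma stackHam_partner (hodd : Odd p) (hb : b ∈ Finset.Icc 1 (p - 1)) {i : ℕ}
    (hi : i ∈ Finset.Icc 1 (p - 1)) :
    stackHam p b i (p - 1 + (p - i)) = (p - 1) - 2 := by
  have hi' := Finset.mem_Icc.mp hi
  rw [stackHam_cross hodd hb hi (Finset.mem_Icc.mpr ⟨by omega, by omega⟩), if_pos rfl]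

lemma sub_one_le_stackHam (hodd : Odd p) (hb : b ∈ Finset.Icc 1 (p - 1)) {r r' : ℕ}
    (hr : r ∈ Finset.Icc 1 (2 * (p - 1))) (hr' : r' ∈ Finset.Icc 1 (2 * (p - 1)))
    (hlt : r < r') (hpartner : ¬ (r ≤ p - 1 ∧ r' = p - 1 + (p - r))) :
    (p - 1) - 1 ≤ stackHam p b r r' := by
  by_cases hblock : r ≤ p - 1 ↔ r' ≤ p - 1
  · rw [stackHam_of_same_block hb hr hr' hlt.ne hblock]
    omega
  · rw [Finset.mem_Icc] at hr hr'
    obtain ⟨k, rfl⟩ : ∃ k, r' = p - 1 + k := ⟨r' - (p - 1), by omega⟩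
    rw [stackHam_cross hodd hb (Finset.mem_Icc.mpr ⟨hr.1, by omega⟩)
      (Finset.mem_Icc.mpr ⟨by omega, by omega⟩)]
    split_ifs <;> omega

end Stack

theorem stmt_19_general (p : ℕ) (hp : p.Prime) (hodd : Odd p)
    (b : ℕ) (hb : b ∈ Finset.Icc 1 (p - 1)) :
    (∀ r ∈ Finset.Icc 1 (2 * (p - 1)), ∀ r' ∈ Finset.Icc 1 (2 * (p - 1)), r ≠ r' →
        (p - 1) - 2 ≤ stackHam p b r r') ∧
    (∃ r ∈ Finset.Icc 1 (2 * (p - 1)), ∃ r' ∈ Finset.Icc 1 (2 * (p - 1)),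
        r ≠ r' ∧ stackHam p b r r' = (p - 1) - 2) ∧
    ((Finset.Icc 1 (2 * (p - 1)) ×ˢ Finset.Icc 1 (2 * (p - 1))).filter
        (fun q => q.1 < q.2 ∧ stackHam p b q.1 q.2 = (p - 1) - 2)
      = (Finset.Icc 1 (p - 1)).image fun i => (i, (p - 1) + (p - i))) := by
  have := Fact.mk hp
  have hp3 := hp.three_le_of_odd hodd
  have mem {a : ℕ} (h1 : 1 ≤ a) (h2 : a ≤ 2 * (p - 1)) : a ∈ Finset.Icc 1 (2 * (p - 1)) :=
    Finset.mem_Icc.mpr ⟨h1, h2⟩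
  have hbound {r r'} (hr : r ∈ Finset.Icc 1 (2 * (p - 1)))
      (hr' : r' ∈ Finset.Icc 1 (2 * (p - 1))) (hlt : r < r') :
      (p - 1) - 2 ≤ stackHam p b r r' := by
    by_cases hpartner : r ≤ p - 1 ∧ r' = p - 1 + (p - r)
    · rw [hpartner.2, stackHam_partner hodd hb
        (Finset.mem_Icc.mpr ⟨(Finset.mem_Icc.mp hr).1, hpartner.1⟩)]
    · exact (Nat.sub_le_sub_left (by omega) _).trans
        (sub_one_le_stackHam hodd hb hr hr' hlt hpartner)
  have h1 : 1 ∈ Finset.Icc 1 (p - 1) := Finset.mem_Icc.mpr ⟨le_rfl, by omega⟩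
  refine ⟨fun r hr r' hr' hne => ?_, ⟨1, mem le_rfl (by omega), p - 1 + (p - 1),
    mem (by omega) (by omega), by omega, stackHam_partner hodd hb h1⟩, ?_⟩
  · rcases hne.lt_or_gt with hlt | hlt
    · exact hbound hr hr' hlt
    · exact stackHam_comm (p := p) r r' ▸ hbound hr' hr hlt
  ext ⟨r, r'⟩
  simp only [Finset.mem_filter, Finset.mem_product, Finset.mem_image, Prod.mk.injEq]
  constructor
  · rintro ⟨⟨hr, hr'⟩, hlt, hham⟩
    by_contra hpartner
    have := sub_one_le_stackHam hodd hb hr hr' hlt fun h =>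
      hpartner ⟨r, Finset.mem_Icc.mpr ⟨(Finset.mem_Icc.mp hr).1, h.1⟩, rfl, h.2.symm⟩
    omega
  · rintro ⟨i, hi, rfl, rfl⟩
    have hi' := Finset.mem_Icc.mp hi
    exact ⟨⟨mem hi'.1 (by omega), mem (by omega) (by omega)⟩, by omega,
      stackHam_partner hodd hb hi⟩

/-- let `p ≥ 5` be an odd prime, `m = p - 1`, `b ∈ {1,…,p-1}`, and let
`O` be the `2m × m` design obtained by stacking `Ẽ_b` and `Ẽ_{p-b}`.  Then every pair
of distinct rows of `O` has Hamming distance at least `m - 2`, the minimum pairwise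
Hamming distance equals `m - 2` (some pair attains it), and the unordered pairs of
distinct rows with Hamming distance exactly `m - 2` are exactly the `m` pairs
consisting of row `i` of `Ẽ_b` and row `p - i` of `Ẽ_{p-b}` (global row `m + p - i`),
`i = 1,…,m`. -/
theorem stmt_19 (p : ℕ) (hp : p.Prime) (hodd : Odd p) (hp5 : 5 ≤ p)
    (b : ℕ) (hb : b ∈ Finset.Icc 1 (p - 1)) :
    (∀ r ∈ Finset.Icc 1 (2 * (p - 1)), ∀ r' ∈ Finset.Icc 1 (2 * (p - 1)), r ≠ r' →
        (p - 1) - 2 ≤ stackHam p b r r') ∧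
    (∃ r ∈ Finset.Icc 1 (2 * (p - 1)), ∃ r' ∈ Finset.Icc 1 (2 * (p - 1)),
        r ≠ r' ∧ stackHam p b r r' = (p - 1) - 2) ∧
    ((Finset.Icc 1 (2 * (p - 1)) ×ˢ Finset.Icc 1 (2 * (p - 1))).filter
        (fun q => q.1 < q.2 ∧ stackHam p b q.1 q.2 = (p - 1) - 2)
      = (Finset.Icc 1 (p - 1)).image fun i => (i, (p - 1) + (p - i))) :=
  stmt_19_general p hp hodd b hb
end
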